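/- arXiv:math/0301294 — 4 statements merged into one kernel-verified Lean document; each statement's English description precedes it below -/
import Mathlib

section
/- For all n ≥ 1 and all (x,y) ∈ ℝ²: if T_{ab}^{(n)}(x,y) = (z,w) then T_{ab}^{(n)}(w,z) = (y,x), where T^{(n)} denotes the n-fold iterate. -/
/-- The piecewise-linear map `T_{ab}`. -/
noncomputable def Tmap (a b : ℝ) : ℝ × ℝ → ℝ × ℝ :=
  fun p => if 0 ≤ p.1 then (a * p.1 - p.2, p.1) else (b * p.1 - p.2, p.1)

lemma Tmap_swap_Tmap (a b : ℝ) (q : ℝ × ℝ) :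
    Tmap a b (Prod.swap (Tmap a b q)) = Prod.swap q := by
  obtain ⟨x, y⟩ := q
  by_cases h : 0 ≤ x <;> simp [Tmap, h, Prod.swap]

lemma Tmap_iter_swap (a b : ℝ) (n : ℕ) (p : ℝ × ℝ) :
    (Tmap a b)^[n] (Prod.swap ((Tmap a b)^[n] p)) = Prod.swap p := by
  induction n generalizing p with
  | zero => simp
  | succ n ih =>
    rw [show (Tmap a b)^[n+1] p = (Tmap a b)^[n] (Tmap a b p) from
        Function.iterate_succ_apply _ _ _,
      Function.iterate_succ_apply', ih (Tmap a b p), Tmap_swap_Tmap]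

theorem Tmap_iterate_swap (a b : ℝ) :
    ∀ n : ℕ, 1 ≤ n → ∀ x y z w : ℝ,
      (Tmap a b)^[n] (x, y) = (z, w) → (Tmap a b)^[n] (w, z) = (y, x) := by
  intro n _ x y z w h
  have := Tmap_iter_swap a b n (x, y)
  rw [h] at this
  exact this
end

section
/- Suppose T_{ab}^{(n)}(0,1) = (0,λ) with λ > 0. Then T_{ab}^{(n)}(0,-1) = (0, -λ⁻¹), T_{ab}^{(n)}(-1,0) = (-λ, 0), and T_{ab}^{(n)}(1,0) = (λ⁻¹, 0). -/
lemma Tmap_swap (a b : ℝ) (p : ℝ × ℝ) :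
    Prod.swap (Tmap a b (Prod.swap (Tmap a b p))) = p := by
  rcases p with ⟨x, y⟩
  simp only [Tmap, Prod.swap]
  split_ifs with h1 h2 h2 <;> simp_all <;> ring

lemma Tmap_cancel (a b : ℝ) : ∀ (n : ℕ) (p : ℝ × ℝ),
    (Tmap a b)^[n] (Prod.swap ((Tmap a b)^[n] (Prod.swap p))) = p := by
  intro n
  induction n with
  | zero => intro p; simp
  | succ n ih =>
    intro p
    have h1 : (Tmap a b)^[n+1] (Prod.swap p)
        = Tmap a b ((Tmap a b)^[n] (Prod.swap p)) :=
      Function.iterate_succ_apply' _ _ _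
    rw [h1, Function.iterate_succ_apply]
    rw [show Tmap a b (Prod.swap (Tmap a b ((Tmap a b)^[n] (Prod.swap p))))
        = Prod.swap ((Tmap a b)^[n] (Prod.swap p)) by
      have := Tmap_swap a b ((Tmap a b)^[n] (Prod.swap p))
      calc Tmap a b (Prod.swap (Tmap a b ((Tmap a b)^[n] (Prod.swap p))))
          = Prod.swap (Prod.swap (Tmap a b (Prod.swap
              (Tmap a b ((Tmap a b)^[n] (Prod.swap p)))))) := by simp
        _ = _ := by rw [this]]
    exact ih p

lemma Tmap_smul (a b t : ℝ) (ht : 0 < t) (p : ℝ × ℝ) :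
    Tmap a b (t • p) = t • Tmap a b p := by
  rcases p with ⟨x, y⟩
  simp only [Tmap, Prod.smul_mk, smul_eq_mul]
  have hts : 0 ≤ t * x ↔ 0 ≤ x := by
    constructor
    · intro h; nlinarith
    · intro h; positivity
  split_ifs with h1 h2 h2 <;> simp_all [Prod.ext_iff] <;> ring

lemma Tmap_iterate_smul (a b t : ℝ) (ht : 0 < t) (n : ℕ) (p : ℝ × ℝ) :
    (Tmap a b)^[n] (t • p) = t • (Tmap a b)^[n] p := by
  induction n generalizing p with
  | zero => simp
  | succ n ih => rw [Function.iterate_succ_apply, Tmap_smul a b t ht,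
      Function.iterate_succ_apply, ih]

theorem Tmap_iterate_pos_lambda (a b lam : ℝ) (n : ℕ) (hn : 1 ≤ n)
    (hlam : 0 < lam) (h : (Tmap a b)^[n] (0, 1) = (0, lam)) :
    (Tmap a b)^[n] (0, -1) = (0, -lam⁻¹) ∧
    (Tmap a b)^[n] (-1, 0) = (-lam, 0) ∧
    (Tmap a b)^[n] (1, 0) = (lam⁻¹, 0) := by
  have hlam' : lam ≠ 0 := ne_of_gt hlam
  -- T^[n] (lam, 0) = (1, 0)
  have hc : (Tmap a b)^[n] (lam, 0) = (1, 0) := by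
    have := Tmap_cancel a b n (1, 0)
    rwa [show Prod.swap ((1:ℝ), (0:ℝ)) = (0, 1) from rfl, h] at this
  -- T^[n] (1, 0) = (lam⁻¹, 0)
  have h10 : (Tmap a b)^[n] (1, 0) = (lam⁻¹, 0) := by
    have hs : (Tmap a b)^[n] (lam • ((1:ℝ), (0:ℝ)))
        = lam • (Tmap a b)^[n] (1, 0) := Tmap_iterate_smul a b lam hlam n _
    rw [show lam • ((1:ℝ), (0:ℝ)) = (lam, 0) by simp, hc] at hs
    have := congrArg (fun v => lam⁻¹ • v) hs
    simp only [smul_smul, inv_mul_cancel₀ hlam', one_smul] at this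
    rw [← this]
    simp [Prod.ext_iff]
  refine ⟨?_, ?_, h10⟩
  · -- T(0,-1) = (1,0), so T^[n+1](0,-1) = T^[n](1,0) = (lam⁻¹,0); solve T q = (lam⁻¹,0)
    have hstep : Tmap a b ((0:ℝ), (-1:ℝ)) = (1, 0) := by
      simp [Tmap]
    have hsucc : Tmap a b ((Tmap a b)^[n] (0, -1)) = (lam⁻¹, 0) := by
      rw [← Function.iterate_succ_apply' (Tmap a b) n (0, -1),
        Function.iterate_succ_apply, hstep, h10]
    set q := (Tmap a b)^[n] ((0:ℝ), (-1:ℝ)) with hq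
    have hq1 : q.1 = 0 := by
      have := congrArg Prod.snd hsucc
      simpa [Tmap, apply_ite Prod.snd] using this
    have hq2 : q.2 = -lam⁻¹ := by
      have := congrArg Prod.fst hsucc
      simp only [Tmap, hq1] at this
      simp at this
      linarith
    exact Prod.ext hq1 hq2
  · -- T(0,1) = (-1,0) and T(0,lam) = (-lam,0)
    have h1 : Tmap a b ((0:ℝ), (1:ℝ)) = (-1, 0) := by simp [Tmap]
    have h2 : Tmap a b ((0:ℝ), lam) = (-lam, 0) := by simp [Tmap]
    calc (Tmap a b)^[n] ((-1:ℝ), (0:ℝ)) = (Tmap a b)^[n] (Tmap a b (0, 1)) := by rw [h1]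
      _ = Tmap a b ((Tmap a b)^[n] (0, 1)) := by
          rw [← Function.iterate_succ_apply, Function.iterate_succ_apply']
      _ = (-lam, 0) := by rw [h, h2]
end

section
/- Suppose T_{ab}^{(n)}(0,1) = (0,λ) with λ < 0. Then λ = -1, and consequently T_{ab}^{(n)}(0,1) = (0,-1) and T_{ab}^{(n)}(-1,0) = (1,0). -/
lemma Tmap_refl (a b : ℝ) (p : ℝ × ℝ) :
    Tmap a b ((Tmap a b p).2, (Tmap a b p).1) = (p.2, p.1) := by
  unfold Tmap
  by_cases h : 0 ≤ p.1 <;> simp [h] <;> ring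

lemma Tmap_iter_refl (a b : ℝ) (n : ℕ) (p : ℝ × ℝ) :
    (Tmap a b)^[n] (((Tmap a b)^[n] p).2, ((Tmap a b)^[n] p).1) = (p.2, p.1) := by
  induction n generalizing p with
  | zero => simp
  | succ n ih =>
    rw [Function.iterate_succ_apply' (Tmap a b) n p, Function.iterate_succ_apply]
    rw [Tmap_refl]
    exact ih p

lemma Tmap_smul_s8 (a b c : ℝ) (hc : 0 < c) (p : ℝ × ℝ) :
    Tmap a b (c * p.1, c * p.2) = (c * (Tmap a b p).1, c * (Tmap a b p).2) := by
  unfold Tmap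
  by_cases h : 0 ≤ p.1
  · have h' : 0 ≤ c * p.1 := by positivity
    simp [h, h']; ring
  · have h' : ¬ 0 ≤ c * p.1 := by
      push_neg at h ⊢; exact mul_neg_of_pos_of_neg hc h
    simp [h, h']; ring

lemma Tmap_iter_smul (a b c : ℝ) (hc : 0 < c) (n : ℕ) (p : ℝ × ℝ) :
    (Tmap a b)^[n] (c * p.1, c * p.2)
      = (c * ((Tmap a b)^[n] p).1, c * ((Tmap a b)^[n] p).2) := by
  induction n generalizing p with
  | zero => simp
  | succ n ih =>
    rw [Function.iterate_succ_apply, Function.iterate_succ_apply,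
      Tmap_smul_s8 a b c hc p, ih]

theorem Tmap_iterate_neg_lambda (a b lam : ℝ) (n : ℕ) (hn : 1 ≤ n)
    (hlam : lam < 0) (h : (Tmap a b)^[n] (0, 1) = (0, lam)) :
    lam = -1 ∧ (Tmap a b)^[n] (0, 1) = (0, -1) ∧
    (Tmap a b)^[n] (-1, 0) = (1, 0) := by
  -- Fact 1 : T^[n] (lam, 0) = (1, 0)
  have h1 : (Tmap a b)^[n] (lam, 0) = (1, 0) := by
    have := Tmap_iter_refl a b n (0, 1)
    rw [h] at this
    simpa using this
  -- Fact 2 : T^[n] (-1, 0) = (-lam, 0)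
  have hT01 : Tmap a b (0, 1) = (-1, 0) := by simp [Tmap]
  have h2 : (Tmap a b)^[n] (-1, 0) = (-lam, 0) := by
    have e1 : (Tmap a b)^[n+1] (0, 1) = (Tmap a b)^[n] (-1, 0) := by
      rw [Function.iterate_succ_apply, hT01]
    have e2 : (Tmap a b)^[n+1] (0, 1) = (-lam, 0) := by
      rw [Function.iterate_succ_apply', h]
      simp [Tmap]
    rw [← e1, e2]
  -- Fact 3 : homogeneity forces lam * lam = 1
  have h3 : (Tmap a b)^[n] (lam, 0)
      = ((-lam) * ((Tmap a b)^[n] (-1, 0)).1, (-lam) * ((Tmap a b)^[n] (-1, 0)).2) := by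
    have := Tmap_iter_smul a b (-lam) (by linarith) n (-1, 0)
    simpa using this
  rw [h1, h2] at h3
  have hlam2 : (-lam) * (-lam) = 1 := by
    have := congrArg Prod.fst h3
    simpa using this.symm
  have hlam1 : lam = -1 := by nlinarith
  subst hlam1
  refine ⟨rfl, h, ?_⟩
  rw [h2]; norm_num
end

section
/- If the orbit of the point (0,1) under T_{ab} is periodic (i.e., T_{ab}^{(p)}(0,1) = (0,1) for some p ≥ 1), then T_{ab} is a map of finite order: T_{ab}^{(p)} is the identity on all of ℝ². Conversely, if T_{ab} has finite order then (0,1) is periodic. -/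
lemma tmap_zero (a b : ℝ) : Tmap a b 0 = 0 := by
  simp [Tmap]

lemma tmap_smul (a b c : ℝ) (hc : 0 < c) (v : ℝ × ℝ) :
    Tmap a b (c • v) = c • Tmap a b v := by
  have h1 : (c • v).1 = c * v.1 := rfl
  have h2 : (c • v).2 = c * v.2 := rfl
  have hiff : 0 ≤ c * v.1 ↔ 0 ≤ v.1 := by
    constructor
    · intro h; nlinarith
    · intro h; positivity
  by_cases h : 0 ≤ v.1
  · simp only [Tmap, h1, h2, hiff.mpr h, if_true, h, Prod.smul_mk, smul_eq_mul]
    exact Prod.ext_iff.mpr ⟨by ring, rfl⟩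
  · have : ¬ (0 ≤ c * v.1) := fun hh => h (hiff.mp hh)
    simp only [Tmap, h1, h2, this, if_false, h, Prod.smul_mk, smul_eq_mul]
    exact Prod.ext_iff.mpr ⟨by ring, rfl⟩

lemma tmap_iter_smul (a b c : ℝ) (hc : 0 < c) (n : ℕ) (v : ℝ × ℝ) :
    (Tmap a b)^[n] (c • v) = c • (Tmap a b)^[n] v := by
  induction n with
  | zero => simp
  | succ n ih =>
    rw [Function.iterate_succ_apply', Function.iterate_succ_apply', ih, tmap_smul a b c hc]

lemma tmap_iter_zero (a b : ℝ) (n : ℕ) : (Tmap a b)^[n] 0 = 0 :=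
  Function.iterate_fixed (tmap_zero a b) n

noncomputable def Smap (a b : ℝ) : ℝ × ℝ → ℝ × ℝ :=
  fun p => (p.2, (if 0 ≤ p.2 then a else b) * p.2 - p.1)

lemma smap_tmap (a b : ℝ) (v : ℝ × ℝ) : Smap a b (Tmap a b v) = v := by
  by_cases h : 0 ≤ v.1 <;> simp [Tmap, Smap, h]

lemma tmap_injective (a b : ℝ) : Function.Injective (Tmap a b) :=
  Function.LeftInverse.injective (smap_tmap a b)

lemma tmap_iter_injective (a b : ℝ) (n : ℕ) : Function.Injective ((Tmap a b)^[n]) :=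
  Function.Injective.iterate (tmap_injective a b) n

lemma tmap_trt (a b : ℝ) (v : ℝ × ℝ) :
    Tmap a b ((Tmap a b v).2, (Tmap a b v).1) = (v.2, v.1) := by
  by_cases h : 0 ≤ v.1 <;> simp [Tmap, h] <;> ring

lemma tmap_iter_trt (a b : ℝ) (n : ℕ) (v : ℝ × ℝ) :
    (Tmap a b)^[n] (((Tmap a b)^[n] v).2, ((Tmap a b)^[n] v).1) = (v.2, v.1) := by
  induction n generalizing v with
  | zero => simp
  | succ n ih =>
    have h1 : (Tmap a b)^[n+1] v = Tmap a b ((Tmap a b)^[n] v) :=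
      Function.iterate_succ_apply' _ _ _
    rw [h1, Function.iterate_succ_apply, tmap_trt]
    exact ih v


lemma tmap_eq_formula (a b : ℝ) (v : ℝ × ℝ) :
    Tmap a b v = (((a+b)/2) * v.1 + ((a-b)/2) * |v.1| - v.2, v.1) := by
  by_cases h : 0 ≤ v.1
  · simp only [Tmap, h, if_true, abs_of_nonneg h]
    exact Prod.ext_iff.mpr ⟨by ring, rfl⟩
  · push_neg at h
    simp only [Tmap, not_le.mpr h, if_false, abs_of_neg h]
    exact Prod.ext_iff.mpr ⟨by ring, rfl⟩

lemma tmap_continuous (a b : ℝ) : Continuous (Tmap a b) := by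
  have : Tmap a b = fun v : ℝ × ℝ =>
      (((a+b)/2) * v.1 + ((a-b)/2) * |v.1| - v.2, v.1) := funext (tmap_eq_formula a b)
  rw [this]
  fun_prop

lemma tmap_iter_continuous (a b : ℝ) (n : ℕ) : Continuous ((Tmap a b)^[n]) :=
  (tmap_continuous a b).iterate n

noncomputable def stepL (c : ℝ) : ℝ × ℝ →ₗ[ℝ] ℝ × ℝ where
  toFun w := (c * w.1 - w.2, w.1)
  map_add' x y := by exact Prod.ext_iff.mpr ⟨by simp; ring, by simp⟩
  map_smul' m x := by
    refine Prod.ext_iff.mpr ⟨?_, ?_⟩ <;> simp [Prod.smul_def, smul_eq_mul] <;> ring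

noncomputable def itinL (a b : ℝ) (v : ℝ × ℝ) : ℕ → (ℝ × ℝ →ₗ[ℝ] ℝ × ℝ)
  | 0 => LinearMap.id
  | k+1 => (stepL (if 0 ≤ ((Tmap a b)^[k] v).1 then a else b)).comp (itinL a b v k)

lemma iter_eq_itinL (a b : ℝ) (v w : ℝ × ℝ) (n : ℕ)
    (h : ∀ k < n, (0 ≤ ((Tmap a b)^[k] v).1 ↔ 0 ≤ ((Tmap a b)^[k] w).1)) :
    (Tmap a b)^[n] w = itinL a b v n w := by
  induction n with
  | zero => simp [itinL]
  | succ n ih =>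
    have hw : (Tmap a b)^[n] w = itinL a b v n w :=
      ih (fun k hk => h k (Nat.lt_succ_of_lt hk))
    rw [Function.iterate_succ_apply', hw]
    show Tmap a b (itinL a b v n w) = stepL _ (itinL a b v n w)
    by_cases hv : 0 ≤ ((Tmap a b)^[n] v).1
    · have hw1 : 0 ≤ (itinL a b v n w).1 := by
        rw [← hw]; exact (h n (Nat.lt_succ_self n)).mp hv
      simp [Tmap, stepL, hv, hw1]
    · have hw1 : ¬ 0 ≤ (itinL a b v n w).1 := by
        rw [← hw]
        exact fun hh => hv ((h n (Nat.lt_succ_self n)).mpr hh)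
      simp [Tmap, stepL, hv, hw1]

lemma fix_two (L : ℝ × ℝ →ₗ[ℝ] ℝ × ℝ) (w1 w2 v : ℝ × ℝ)
    (hdet : w1.1 * w2.2 - w1.2 * w2.1 ≠ 0)
    (h1 : L w1 = w1) (h2 : L w2 = w2) : L v = v := by
  set Δ := w1.1 * w2.2 - w1.2 * w2.1 with hΔ
  set α := (v.1 * w2.2 - v.2 * w2.1) / Δ with hα
  set β := (w1.1 * v.2 - w1.2 * v.1) / Δ with hβ
  have hv : α • w1 + β • w2 = v := by
    refine Prod.ext_iff.mpr ⟨?_, ?_⟩ <;>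
      simp only [Prod.fst_add, Prod.snd_add, Prod.smul_fst, Prod.smul_snd, smul_eq_mul,
        hα, hβ] <;>
      field_simp <;> ring
  calc L v = L (α • w1 + β • w2) := by rw [hv]
    _ = α • L w1 + β • L w2 := by simp [L.map_add, L.map_smul]
    _ = v := by rw [h1, h2, hv]


section
variable {a b : ℝ} {p : ℕ}

lemma tmap_01 (a b : ℝ) : Tmap a b (0, 1) = (-1, 0) := by
  norm_num [Tmap]

lemma p_ge_two (hp : 1 ≤ p) (h01 : (Tmap a b)^[p] (0, 1) = (0, 1)) : 2 ≤ p := by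
  by_contra h
  have hp1 : p = 1 := by omega
  rw [hp1, Function.iterate_one, tmap_01] at h01
  exact absurd (congrArg Prod.fst h01) (by norm_num)

lemma fix_neg10 (h01 : (Tmap a b)^[p] (0, 1) = (0, 1)) :
    (Tmap a b)^[p] (-1, 0) = (-1, 0) := by
  have h2 : (Tmap a b)^[p] (Tmap a b (0,1)) = Tmap a b ((Tmap a b)^[p] (0,1)) :=
    (Function.iterate_succ_apply (Tmap a b) p (0,1)).symm.trans
      (Function.iterate_succ_apply' (Tmap a b) p (0,1))
  rw [h01, tmap_01] at h2
  exact h2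

lemma fix_10 (h01 : (Tmap a b)^[p] (0, 1) = (0, 1)) :
    (Tmap a b)^[p] (1, 0) = (1, 0) := by
  have := tmap_iter_trt a b p (0, 1)
  rw [h01] at this
  simpa using this

lemma fix_0neg1 (h01 : (Tmap a b)^[p] (0, 1) = (0, 1)) :
    (Tmap a b)^[p] (0, -1) = (0, -1) := by
  have := tmap_iter_trt a b p (-1, 0)
  rw [fix_neg10 h01] at this
  simpa using this

lemma zfix (h01 : (Tmap a b)^[p] (0, 1) = (0, 1)) (v : ℝ × ℝ) (k : ℕ)
    (hk : ((Tmap a b)^[k] v).1 = 0) : (Tmap a b)^[p] v = v := by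
  set w := (Tmap a b)^[k] v with hw
  have hfixw : (Tmap a b)^[p] w = w := by
    have hw2 : w = (0, w.2) := Prod.ext_iff.mpr ⟨hk, rfl⟩
    rcases lt_trichotomy w.2 0 with ht | ht | ht
    · have : w = (-w.2) • ((0 : ℝ), (-1 : ℝ)) := by
        rw [hw2]; exact Prod.ext_iff.mpr ⟨by simp, by simp⟩
      rw [this, tmap_iter_smul a b _ (by linarith) p, fix_0neg1 h01]
    · have : w = 0 := by rw [hw2, ht]; rfl
      rw [this, tmap_iter_zero]
    · have : w = w.2 • ((0 : ℝ), (1 : ℝ)) := by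
        rw [hw2]; exact Prod.ext_iff.mpr ⟨by simp, by simp⟩
      rw [this, tmap_iter_smul a b _ ht p, h01]
  have hcomm : (Tmap a b)^[k] ((Tmap a b)^[p] v) = (Tmap a b)^[p] ((Tmap a b)^[k] v) := by
    rw [← Function.iterate_add_apply, ← Function.iterate_add_apply, Nat.add_comm]
  apply tmap_iter_injective a b k
  rw [hcomm, ← hw, hfixw]

end
open Filter Topology

lemma main_strict (a b : ℝ) (p : ℕ) (hp : 2 ≤ p)
    (h01 : (Tmap a b)^[p] (0, 1) = (0, 1))
    (v : ℝ × ℝ)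
    (hv : ∀ k < p, ((Tmap a b)^[k] v).1 ≠ 0) :
    (Tmap a b)^[p] v = v := by
  have hneg : (Tmap a b)^[p] (0, -1) = (0, -1) := fix_0neg1 h01
  set L := itinL a b v p with hLdef
  set O : Set ℝ :=
    {m | ∀ k < p, 0 < ((Tmap a b)^[k] (v.1, m)).1 * ((Tmap a b)^[k] v).1} with hOdef
  have contk : ∀ k : ℕ, Continuous fun m : ℝ => ((Tmap a b)^[k] (v.1, m)).1 := fun k =>
    continuous_fst.comp ((tmap_iter_continuous a b k).comp
      (continuous_const.prodMk continuous_id))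
  have hLcont : Continuous fun w : ℝ × ℝ => L w := L.continuous_of_finiteDimensional
  have hOopen : IsOpen O := by
    have hrw : O = ⋂ k ∈ Finset.range p,
        {m : ℝ | 0 < ((Tmap a b)^[k] (v.1, m)).1 * ((Tmap a b)^[k] v).1} := by
      ext m; simp [hOdef, Finset.mem_range]
    rw [hrw]
    exact isOpen_biInter_finset fun k _ =>
      isOpen_lt continuous_const ((contk k).mul continuous_const)
  have hvO : v.2 ∈ O := by
    intro k hk
    have hh : ((v.1 : ℝ), (v.2 : ℝ)) = v := rfl
    rw [hh]
    exact mul_self_pos.mpr (hv k hk)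
  have hFm : ∀ m ∈ O, (Tmap a b)^[p] (v.1, m) = L (v.1, m) := by
    intro m hm
    apply iter_eq_itinL
    intro k hk
    rcases mul_pos_iff.mp (hm k hk) with ⟨h3, h4⟩ | ⟨h3, h4⟩
    · exact iff_of_true (le_of_lt h4) (le_of_lt h3)
    · exact iff_of_false (not_le.mpr h4) (not_le.mpr h3)
  -- RIGHT SIDE
  have hright : (∃ d : ℝ, v.2 < d ∧ L (v.1, d) = (v.1, d)) ∨
      ((∀ m : ℝ, v.2 ≤ m → m ∈ O) ∧ L (0, 1) = (0, 1)) := by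
    by_cases hS : {m : ℝ | v.2 < m ∧ m ∉ O}.Nonempty
    · left
      set S := {m : ℝ | v.2 < m ∧ m ∉ O} with hSdef
      have hbdd : BddBelow S := ⟨v.2, fun m hm => le_of_lt hm.1⟩
      set d := sInf S with hd
      obtain ⟨ε, hε, hball⟩ := Metric.isOpen_iff.mp hOopen v.2 hvO
      have hlb : ∀ m ∈ S, v.2 + ε ≤ m := by
        intro m hm
        by_contra hcon
        push_neg at hcon
        exact hm.2 (hball (by rw [Real.ball_eq_Ioo]; exact ⟨by linarith [hm.1], hcon⟩))
      have hvd : v.2 < d := lt_of_lt_of_le (by linarith) (le_csInf hS hlb)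
      have hdO : d ∉ O := by
        intro hdO
        obtain ⟨δ, hδ, hballd⟩ := Metric.isOpen_iff.mp hOopen d hdO
        obtain ⟨m, hmS, hmlt⟩ := (csInf_lt_iff hbdd hS).mp (show sInf S < d + δ by
          rw [← hd]; linarith)
        have hdm : d ≤ m := csInf_le hbdd hmS
        exact hmS.2 (hballd (by rw [Real.ball_eq_Ioo]; exact ⟨by linarith, by linarith⟩))
      have hIco : ∀ m, v.2 ≤ m → m < d → m ∈ O := by
        intro m h1 h2
        rcases eq_or_lt_of_le h1 with h1 | h1
        · rw [← h1]; exact hvO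
        · by_contra hmO
          exact absurd (csInf_le hbdd ⟨h1, hmO⟩) (not_le.mpr h2)
      obtain ⟨k, hk, hkle⟩ : ∃ k < p,
          ((Tmap a b)^[k] (v.1, d)).1 * ((Tmap a b)^[k] v).1 ≤ 0 := by
        by_contra hcon
        push_neg at hcon
        exact hdO fun k hk => hcon k hk
      have hge : 0 ≤ ((Tmap a b)^[k] (v.1, d)).1 * ((Tmap a b)^[k] v).1 := by
        have htd : Tendsto (fun m : ℝ => ((Tmap a b)^[k] (v.1, m)).1 * ((Tmap a b)^[k] v).1)
            (𝓝[<] d) (𝓝 (((Tmap a b)^[k] (v.1, d)).1 * ((Tmap a b)^[k] v).1)) :=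
          ((contk k).mul continuous_const).continuousWithinAt
        refine ge_of_tendsto htd ?_
        filter_upwards [Ioo_mem_nhdsLT_of_mem ⟨hvd, le_refl d⟩] with m hm
        exact le_of_lt (hIco m (le_of_lt hm.1) hm.2 k hk)
      have hzero : ((Tmap a b)^[k] (v.1, d)).1 = 0 := by
        rcases mul_eq_zero.mp (le_antisymm hkle hge) with h | h
        · exact h
        · exact absurd h (hv k hk)
      have hfixd : (Tmap a b)^[p] (v.1, d) = (v.1, d) := zfix h01 (v.1, d) k hzero
      have h1 : Tendsto (fun m : ℝ => (Tmap a b)^[p] (v.1, m)) (𝓝[<] d)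
          (𝓝 ((Tmap a b)^[p] (v.1, d))) :=
        ((tmap_iter_continuous a b p).comp
          (continuous_const.prodMk continuous_id)).continuousWithinAt
      have h2 : Tendsto (fun m : ℝ => L (v.1, m)) (𝓝[<] d) (𝓝 (L (v.1, d))) :=
        (hLcont.comp (continuous_const.prodMk continuous_id)).continuousWithinAt
      have heq : (fun m : ℝ => (Tmap a b)^[p] (v.1, m)) =ᶠ[𝓝[<] d]
          fun m : ℝ => L (v.1, m) := by
        filter_upwards [Ioo_mem_nhdsLT_of_mem ⟨hvd, le_refl d⟩] with m hm
        exact hFm m (hIco m (le_of_lt hm.1) hm.2)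
      have hkey := tendsto_nhds_unique (h1.congr' heq) h2
      exact ⟨d, hvd, by rw [← hkey, hfixd]⟩
    · right
      have hall : ∀ m : ℝ, v.2 ≤ m → m ∈ O := by
        intro m hm
        rcases eq_or_lt_of_le hm with hm | hm
        · rw [← hm]; exact hvO
        · by_contra hmO
          exact hS ⟨m, hm, hmO⟩
      refine ⟨hall, ?_⟩
      have key : ∀ m : ℝ, max v.2 1 ≤ m →
          (Tmap a b)^[p] ((v.1 / m : ℝ), (1:ℝ)) = L (v.1 / m, 1) := by
        intro m hm
        have hm1 : (1:ℝ) ≤ m := le_trans (le_max_right _ _) hm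
        have hm0 : (0:ℝ) < m := by linarith
        have hsmul : (m⁻¹ : ℝ) • ((v.1 : ℝ), m) = (v.1 / m, 1) := by
          have : m⁻¹ * m = 1 := inv_mul_cancel₀ (ne_of_gt hm0)
          simp only [Prod.smul_mk, smul_eq_mul, this]
          rw [inv_mul_eq_div]
        calc (Tmap a b)^[p] ((v.1 / m : ℝ), (1:ℝ))
            = (Tmap a b)^[p] (m⁻¹ • (v.1, m)) := by rw [hsmul]
          _ = m⁻¹ • (Tmap a b)^[p] (v.1, m) := tmap_iter_smul a b _ (inv_pos.mpr hm0) p _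
          _ = m⁻¹ • L (v.1, m) := by rw [hFm m (hall m (le_trans (le_max_left _ _) hm))]
          _ = L (m⁻¹ • (v.1, m)) := (L.map_smul _ _).symm
          _ = L (v.1 / m, 1) := by rw [hsmul]
      have ht1 : Tendsto (fun m : ℝ => ((v.1 / m : ℝ), (1:ℝ))) atTop (𝓝 (0, 1)) := by
        have hdiv : Tendsto (fun m : ℝ => v.1 / m) atTop (𝓝 0) :=
          tendsto_const_nhds.div_atTop tendsto_id
        exact hdiv.prodMk_nhds tendsto_const_nhds
      have hA : Tendsto (fun m : ℝ => (Tmap a b)^[p] (v.1 / m, 1)) atTop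
          (𝓝 ((Tmap a b)^[p] (0, 1))) :=
        ((tmap_iter_continuous a b p).continuousAt).tendsto.comp ht1
      have hB : Tendsto (fun m : ℝ => L (v.1 / m, 1)) atTop (𝓝 (L (0, 1))) :=
        (hLcont.continuousAt).tendsto.comp ht1
      have heq : (fun m : ℝ => (Tmap a b)^[p] (v.1 / m, 1)) =ᶠ[atTop]
          fun m : ℝ => L (v.1 / m, 1) := by
        filter_upwards [eventually_ge_atTop (max v.2 1)] with m hm
        exact key m hm
      have h3 := tendsto_nhds_unique (hA.congr' heq) hB
      rw [h01] at h3
      exact h3.symm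
  -- LEFT SIDE
  have hleft : (∃ c : ℝ, c < v.2 ∧ L (v.1, c) = (v.1, c)) ∨
      ((∀ m : ℝ, m ≤ v.2 → m ∈ O) ∧ L (0, -1) = (0, -1)) := by
    by_cases hS : {m : ℝ | m < v.2 ∧ m ∉ O}.Nonempty
    · left
      set S := {m : ℝ | m < v.2 ∧ m ∉ O} with hSdef
      have hbdd : BddAbove S := ⟨v.2, fun m hm => le_of_lt hm.1⟩
      set c := sSup S with hc
      obtain ⟨ε, hε, hball⟩ := Metric.isOpen_iff.mp hOopen v.2 hvO
      have hub : ∀ m ∈ S, m ≤ v.2 - ε := by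
        intro m hm
        by_contra hcon
        push_neg at hcon
        exact hm.2 (hball (by rw [Real.ball_eq_Ioo]; exact ⟨by linarith, by linarith [hm.1]⟩))
      have hcv : c < v.2 := lt_of_le_of_lt (csSup_le hS hub) (by linarith)
      have hcO : c ∉ O := by
        intro hcO
        obtain ⟨δ, hδ, hballd⟩ := Metric.isOpen_iff.mp hOopen c hcO
        obtain ⟨m, hmS, hmlt⟩ := (lt_csSup_iff hbdd hS).mp (show c - δ < sSup S by
          rw [← hc]; linarith)
        have hdm : m ≤ c := le_csSup hbdd hmS
        exact hmS.2 (hballd (by rw [Real.ball_eq_Ioo]; exact ⟨by linarith, by linarith⟩))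
      have hIoc : ∀ m, c < m → m ≤ v.2 → m ∈ O := by
        intro m h2 h1
        rcases eq_or_lt_of_le h1 with h1 | h1
        · rw [h1]; exact hvO
        · by_contra hmO
          exact absurd (le_csSup hbdd ⟨h1, hmO⟩) (not_le.mpr h2)
      obtain ⟨k, hk, hkle⟩ : ∃ k < p,
          ((Tmap a b)^[k] (v.1, c)).1 * ((Tmap a b)^[k] v).1 ≤ 0 := by
        by_contra hcon
        push_neg at hcon
        exact hcO fun k hk => hcon k hk
      have hge : 0 ≤ ((Tmap a b)^[k] (v.1, c)).1 * ((Tmap a b)^[k] v).1 := by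
        have htd : Tendsto (fun m : ℝ => ((Tmap a b)^[k] (v.1, m)).1 * ((Tmap a b)^[k] v).1)
            (𝓝[>] c) (𝓝 (((Tmap a b)^[k] (v.1, c)).1 * ((Tmap a b)^[k] v).1)) :=
          ((contk k).mul continuous_const).continuousWithinAt
        refine ge_of_tendsto htd ?_
        filter_upwards [Ioo_mem_nhdsGT_of_mem ⟨le_refl c, hcv⟩] with m hm
        exact le_of_lt (hIoc m hm.1 (le_of_lt hm.2) k hk)
      have hzero : ((Tmap a b)^[k] (v.1, c)).1 = 0 := by
        rcases mul_eq_zero.mp (le_antisymm hkle hge) with h | h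
        · exact h
        · exact absurd h (hv k hk)
      have hfixc : (Tmap a b)^[p] (v.1, c) = (v.1, c) := zfix h01 (v.1, c) k hzero
      have h1 : Tendsto (fun m : ℝ => (Tmap a b)^[p] (v.1, m)) (𝓝[>] c)
          (𝓝 ((Tmap a b)^[p] (v.1, c))) :=
        ((tmap_iter_continuous a b p).comp
          (continuous_const.prodMk continuous_id)).continuousWithinAt
      have h2 : Tendsto (fun m : ℝ => L (v.1, m)) (𝓝[>] c) (𝓝 (L (v.1, c))) :=
        (hLcont.comp (continuous_const.prodMk continuous_id)).continuousWithinAt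
      have heq : (fun m : ℝ => (Tmap a b)^[p] (v.1, m)) =ᶠ[𝓝[>] c]
          fun m : ℝ => L (v.1, m) := by
        filter_upwards [Ioo_mem_nhdsGT_of_mem ⟨le_refl c, hcv⟩] with m hm
        exact hFm m (hIoc m hm.1 (le_of_lt hm.2))
      have hkey := tendsto_nhds_unique (h1.congr' heq) h2
      exact ⟨c, hcv, by rw [← hkey, hfixc]⟩
    · right
      have hall : ∀ m : ℝ, m ≤ v.2 → m ∈ O := by
        intro m hm
        rcases eq_or_lt_of_le hm with hm | hm
        · rw [hm]; exact hvO
        · by_contra hmO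
          exact hS ⟨m, hm, hmO⟩
      refine ⟨hall, ?_⟩
      have key : ∀ m : ℝ, m ≤ min v.2 (-1) →
          (Tmap a b)^[p] ((-v.1 / m : ℝ), (-1:ℝ)) = L (-v.1 / m, -1) := by
        intro m hm
        have hm1 : m ≤ (-1:ℝ) := le_trans hm (min_le_right _ _)
        have hm0 : m < 0 := by linarith
        have hpos : (0:ℝ) < -m⁻¹ := by
          have : m⁻¹ < 0 := inv_neg''.mpr hm0
          linarith
        have hsmul : (-m⁻¹ : ℝ) • ((v.1 : ℝ), m) = (-v.1 / m, -1) := by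
          have : m⁻¹ * m = 1 := inv_mul_cancel₀ (ne_of_lt hm0)
          simp only [Prod.smul_mk, smul_eq_mul, neg_mul, this]
          refine Prod.ext_iff.mpr ⟨?_, rfl⟩
          field_simp
        calc (Tmap a b)^[p] ((-v.1 / m : ℝ), (-1:ℝ))
            = (Tmap a b)^[p] ((-m⁻¹) • (v.1, m)) := by rw [hsmul]
          _ = (-m⁻¹) • (Tmap a b)^[p] (v.1, m) := tmap_iter_smul a b _ hpos p _
          _ = (-m⁻¹) • L (v.1, m) := by rw [hFm m (hall m (le_trans hm (min_le_left _ _)))]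
          _ = L ((-m⁻¹) • (v.1, m)) := (L.map_smul _ _).symm
          _ = L (-v.1 / m, -1) := by rw [hsmul]
      have ht1 : Tendsto (fun m : ℝ => ((-v.1 / m : ℝ), (-1:ℝ))) atBot (𝓝 (0, -1)) := by
        have hdiv : Tendsto (fun m : ℝ => -v.1 / m) atBot (𝓝 0) := by
          have h4 : Tendsto (fun m : ℝ => v.1 / (-m)) atBot (𝓝 0) :=
            (tendsto_const_nhds.div_atTop tendsto_id).comp tendsto_neg_atBot_atTop
          simpa [div_neg, neg_div] using h4
        exact hdiv.prodMk_nhds tendsto_const_nhds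
      have hA : Tendsto (fun m : ℝ => (Tmap a b)^[p] (-v.1 / m, -1)) atBot
          (𝓝 ((Tmap a b)^[p] (0, -1))) :=
        ((tmap_iter_continuous a b p).continuousAt).tendsto.comp ht1
      have hB : Tendsto (fun m : ℝ => L (-v.1 / m, -1)) atBot (𝓝 (L (0, -1))) :=
        (hLcont.continuousAt).tendsto.comp ht1
      have heq : (fun m : ℝ => (Tmap a b)^[p] (-v.1 / m, -1)) =ᶠ[atBot]
          fun m : ℝ => L (-v.1 / m, -1) := by
        filter_upwards [eventually_le_atBot (min v.2 (-1))] with m hm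
        exact key m hm
      have h3 := tendsto_nhds_unique (hA.congr' heq) hB
      rw [hneg] at h3
      exact h3.symm
  -- ASSEMBLY
  have hv1 : v.1 ≠ 0 := by
    have := hv 0 (by omega)
    simpa using this
  have hvv : (Tmap a b)^[p] v = L v := by
    have := hFm v.2 hvO
    rwa [Prod.mk.eta] at this
  rw [hvv]
  rcases hright with ⟨d, hvd, hLd⟩ | ⟨hallr, hL1⟩
  · rcases hleft with ⟨c, hcv, hLc⟩ | ⟨halll, hLneg⟩
    · refine fix_two L (v.1, c) (v.1, d) v ?_ hLc hLd
      intro hcon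
      rcases mul_eq_zero.mp (show v.1 * (d - c) = 0 by linear_combination hcon) with h | h
      · exact hv1 h
      · have : c < d := by linarith
        linarith
    · refine fix_two L (0, -1) (v.1, d) v ?_ hLneg hLd
      simpa using hv1
  · rcases hleft with ⟨c, hcv, hLc⟩ | ⟨halll, hLneg⟩
    · refine fix_two L (v.1, c) (0, 1) v ?_ hLc hL1
      simpa using hv1
    · exfalso
      set z : ℝ := (if 0 ≤ v.1 then a else b) * v.1 with hz
      have hzO : z ∈ O := by
        rcases le_total z v.2 with h | h
        · exact halll z h
        · exact hallr z h
      have hTz : ((Tmap a b)^[1] (v.1, z)).1 = 0 := by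
        rw [Function.iterate_one]
        by_cases h : 0 ≤ v.1 <;> simp [Tmap, h, hz]
      have := hzO 1 (by omega)
      rw [hTz] at this
      simp at this


theorem Tmap_finite_order_iff_orbit_of_basepoint_periodic (a b : ℝ) :
    (∀ p : ℕ, 1 ≤ p → (Tmap a b)^[p] (0, 1) = (0, 1) →
      ∀ v : ℝ × ℝ, (Tmap a b)^[p] v = v) ∧
    ((∃ p : ℕ, 1 ≤ p ∧ ∀ v : ℝ × ℝ, (Tmap a b)^[p] v = v) →
      ∃ p : ℕ, 1 ≤ p ∧ (Tmap a b)^[p] (0, 1) = (0, 1)) := by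
  constructor
  · intro p hp h01 v
    have hp2 : 2 ≤ p := p_ge_two hp h01
    by_cases hz : ∃ k, k < p ∧ ((Tmap a b)^[k] v).1 = 0
    · obtain ⟨k, _, hk⟩ := hz
      exact zfix h01 v k hk
    · push_neg at hz
      exact main_strict a b p hp2 h01 v (fun k hk => hz k hk)
  · rintro ⟨p, hp, hid⟩
    exact ⟨p, hp, hid (0, 1)⟩
end
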